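/- Let Δ, ν be integers with Δ, ν ≥ 2 such that ⌈Δ/2⌉ divides ν, and let G be a finite simple graph with no isolated vertices, maximum degree at most Δ, matching number at most ν, and exactly Δν + (ν/⌈Δ/2⌉)·⌊Δ/2⌋ edges. Then every connected component C of G has matching number ν(C) = ⌈Δ/2⌉. -/

import Mathlib

/-- The number of edges of a simple graph. -/
noncomputable def edgeCount {V : Type*} (G : SimpleGraph V) : ℕ := G.edgeSet.ncard

/-- The independence number: largest size of a set of pairwise nonadjacent vertices. -/
noncomputable def indNum {V : Type*} (G : SimpleGraph V) : ℕ :=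
  sSup {n | ∃ s : Finset V, (∀ x ∈ s, ∀ y ∈ s, ¬ G.Adj x y) ∧ s.card = n}

/-- A finite set of edges of `G` forming a matching (pairwise vertex-disjoint edges). -/
def IsMatchingFinset {V : Type*} (G : SimpleGraph V) (m : Finset (Sym2 V)) : Prop :=
  ↑m ⊆ G.edgeSet ∧ ∀ e ∈ m, ∀ f ∈ m, e ≠ f → ∀ v : V, ¬(v ∈ e ∧ v ∈ f)

/-- The matching number: largest size of a matching. -/
noncomputable def matNum {V : Type*} (G : SimpleGraph V) : ℕ :=
  sSup {n | ∃ m : Finset (Sym2 V), IsMatchingFinset G m ∧ m.card = n}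

/-- The maximum degree. -/
noncomputable def maxDeg {V : Type*} (G : SimpleGraph V) : ℕ :=
  ⨆ v, (G.neighborSet v).ncard

/-- `Gext α ν`: disjoint union of `K_{2ν+1}` with `α - 1` isolated vertices. -/
def Gext (α ν : ℕ) : SimpleGraph (Fin (2*ν+1) ⊕ Fin (α-1)) :=
  SimpleGraph.fromRel (fun x y => x.isLeft = true ∧ y.isLeft = true)

/-- `Hext α ν`: the complete split graph: clique of size `ν` joined to an
independent set of size `α`. -/
def Hext (α ν : ℕ) : SimpleGraph (Fin ν ⊕ Fin α) :=
  SimpleGraph.fromRel (fun x _ => x.isLeft = true)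

/-- `Fext α Δ`: disjoint union of `α` copies of `K_{Δ+1}`. -/
def Fext (α Δ : ℕ) : SimpleGraph (Fin α × Fin (Δ+1)) :=
  SimpleGraph.fromRel (fun x y => x.1 = y.1)

/-- `Jgraph Δ`: for even `Δ` this is `K_{Δ+1}`; for odd `Δ = 2j-1` it is `K_{2j}`
minus a perfect matching (vertices `2k, 2k+1` are nonadjacent) together with an extra
vertex (the last one) joined to all but one (vertex `0`) of the other vertices. -/
def Jgraph (Δ : ℕ) : SimpleGraph (Fin (2*((Δ+1)/2)+1)) :=
  SimpleGraph.fromRel (fun x y =>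
    if Δ % 2 = 0 then True
    else (x.val < 2*((Δ+1)/2) ∧ y.val < 2*((Δ+1)/2) ∧ x.val/2 ≠ y.val/2) ∨
         (x.val = 2*((Δ+1)/2) ∧ 0 < y.val ∧ y.val < 2*((Δ+1)/2)))

/-- `G` is edge-extremal for `(α, ν)`: it has independence number `α`, matching number `ν`,
and the maximum number of edges among all finite simple graphs with independence number `α`
and matching number `ν`. -/
def EdgeExtremal {V : Type*} [Fintype V] (G : SimpleGraph V) (α ν : ℕ) : Prop :=
  indNum G = α ∧ matNum G = ν ∧
    ∀ (W : Type) [Fintype W] (H : SimpleGraph W),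
      indNum H = α → matNum H = ν → edgeCount H ≤ edgeCount G

/-!
Write `k = ⌈Δ/2⌉` and `b = ⌊Δ/2⌋`. Delete the edges at vertices covered by every maximum
matching, one vertex at a time: each step removes at most `Δ` edges and lowers the matching
number. In the remaining graph `H` no vertex is covered by every maximum matching, so by Gallai's
lemma each component `C` has at most `2ν(C) + 1` vertices, hence at most `Δν(C) + b` edges, and
at most `Δν(C)` edges when `ν(C) < k`. Summing, `e(G) ≤ Δν + tb`, where `t` components of `H`
have `ν(C) ≥ k`, so that `kt ≤ ν`. When `e(G) = Δν + (ν/k)b` this forces `t = ν/k`, `H = G`,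
and `ν(C) = k` for every component, none of them having `ν(C) = 0`.
-/

open Finset SimpleGraph
open scoped Classical

section Matching

variable {V W : Type*} {G : SimpleGraph V} {m : Finset (Sym2 V)}

noncomputable def matchedVerts (m : Finset (Sym2 V)) : Finset V := m.biUnion Sym2.toFinset

@[simp] lemma mem_matchedVerts {v : V} : v ∈ matchedVerts m ↔ ∃ e ∈ m, v ∈ e := by
  simp [matchedVerts]

lemma matchedVerts_mono {m' : Finset (Sym2 V)} (h : m' ⊆ m) :
    matchedVerts m' ⊆ matchedVerts m :=
  biUnion_subset_biUnion_of_subset_left _ h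

lemma IsMatchingFinset.eq_of_mem_of_mem (hm : IsMatchingFinset G m) {e f : Sym2 V}
    (he : e ∈ m) (hf : f ∈ m) {v : V} (hve : v ∈ e) (hvf : v ∈ f) : e = f :=
  by_contra fun hef => hm.2 e he f hf hef v ⟨hve, hvf⟩

lemma IsMatchingFinset.subset {m' : Finset (Sym2 V)} (hm : IsMatchingFinset G m) (h : m' ⊆ m) :
    IsMatchingFinset G m' :=
  ⟨(coe_subset.2 h).trans hm.1, fun e he f hf => hm.2 e (h he) f (h hf)⟩

lemma IsMatchingFinset.mono {H : SimpleGraph V} (hm : IsMatchingFinset G m) (h : G ≤ H) :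
    IsMatchingFinset H m :=
  ⟨hm.1.trans (edgeSet_mono h), hm.2⟩

lemma isMatchingFinset_singleton {a b : V} (hab : G.Adj a b) : IsMatchingFinset G {s(a, b)} :=
  ⟨by simpa using hab, fun e he f hf hef =>
    absurd ((mem_singleton.1 he).trans (mem_singleton.1 hf).symm) hef⟩

lemma IsMatchingFinset.insert (hm : IsMatchingFinset G m) {a b : V} (hab : G.Adj a b)
    (ha : a ∉ matchedVerts m) (hb : b ∉ matchedVerts m) :
    IsMatchingFinset G (insert s(a, b) m) := by
  have hfree : ∀ f ∈ m, ∀ v ∈ s(a, b), v ∉ f := by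
    rintro f hf v hv hvf
    rcases Sym2.mem_iff.1 hv with rfl | rfl
    exacts [ha (mem_matchedVerts.2 ⟨f, hf, hvf⟩), hb (mem_matchedVerts.2 ⟨f, hf, hvf⟩)]
  refine ⟨by simpa [Set.insert_subset_iff] using ⟨hab, hm.1⟩, ?_⟩
  intro e he f hf hef v ⟨hve, hvf⟩
  rcases mem_insert.1 he with rfl | he <;> rcases mem_insert.1 hf with rfl | hf
  · exact hef rfl
  · exact hfree f hf v hve hvf
  · exact hfree e he v hvf hve
  · exact hm.2 e he f hf hef v ⟨hve, hvf⟩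

lemma card_insert_of_notMem_matchedVerts {a b : V} (ha : a ∉ matchedVerts m) :
    #(insert s(a, b) m) = #m + 1 :=
  card_insert_of_notMem fun h => ha (mem_matchedVerts.2 ⟨_, h, Sym2.mem_mk_left a b⟩)

lemma IsMatchingFinset.card_matchedVerts (hm : IsMatchingFinset G m) :
    #(matchedVerts m) = 2 * #m := by
  rw [matchedVerts, card_biUnion, sum_congr rfl fun e he =>
    Sym2.card_toFinset_of_not_isDiag e (G.not_isDiag_of_mem_edgeSet (hm.1 he)), sum_const,
    smul_eq_mul, mul_comm]
  intro e he f hf hef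
  simp only [Function.onFun, Finset.disjoint_left, Sym2.mem_toFinset]
  exact fun v hve hvf => hm.2 e he f hf hef v ⟨hve, hvf⟩

lemma IsMatchingFinset.map {G' : SimpleGraph W} (f : G ↪g G') (hm : IsMatchingFinset G m) :
    IsMatchingFinset G' (m.image (Sym2.map f)) := by
  refine ⟨?_, ?_⟩
  · simp only [coe_image, Set.image_subset_iff]
    exact fun e he => f.map_mem_edgeSet_iff.2 (hm.1 he)
  · simp only [mem_image]
    rintro _ ⟨e, he, rfl⟩ _ ⟨e', he', rfl⟩ hne v ⟨hv, hv'⟩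
    obtain ⟨a, ha, rfl⟩ := Sym2.mem_map.1 hv
    obtain ⟨a', ha', haa'⟩ := Sym2.mem_map.1 hv'
    rw [f.injective haa'] at ha'
    exact hne (congrArg _ (hm.eq_of_mem_of_mem he he' ha ha'))

lemma IsMatchingFinset.comap {G' : SimpleGraph W} {m : Finset (Sym2 W)} (f : G ↪g G')
    (hm : IsMatchingFinset G' m) :
    IsMatchingFinset G (m.preimage (Sym2.map f) (Sym2.map.injective f.injective).injOn) := by
  refine ⟨fun e he => f.map_mem_edgeSet_iff.1 (hm.1 (mem_preimage.1 he)), ?_⟩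
  intro e he e' he' hne v ⟨hv, hv'⟩
  exact hne (Sym2.map.injective f.injective (hm.eq_of_mem_of_mem (mem_preimage.1 he)
    (mem_preimage.1 he') (Sym2.mem_map.2 ⟨v, hv, rfl⟩) (Sym2.mem_map.2 ⟨v, hv', rfl⟩)))

lemma IsMatchingFinset.biUnion {ι : Type*} {s : Finset ι} {m : ι → Finset (Sym2 V)}
    (hm : ∀ i ∈ s, IsMatchingFinset G (m i))
    (hdisj : (s : Set ι).PairwiseDisjoint (matchedVerts ∘ m)) :
    IsMatchingFinset G (s.biUnion m) ∧ #(s.biUnion m) = ∑ i ∈ s, #(m i) := by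
  have hsep : ∀ i ∈ s, ∀ j ∈ s, ∀ e ∈ m i, ∀ f ∈ m j, ∀ v ∈ e, v ∈ f → i = j :=
    fun i hi j hj e he f hf v hve hvf => by_contra fun hij => Finset.disjoint_left.1
      (hdisj hi hj hij) (mem_matchedVerts.2 ⟨e, he, hve⟩) (mem_matchedVerts.2 ⟨f, hf, hvf⟩)
  refine ⟨⟨?_, ?_⟩, card_biUnion fun i hi j hj hij => Finset.disjoint_left.2 fun e hei hej => ?_⟩
  · simp only [coe_biUnion, Set.iUnion_subset_iff]
    exact fun i hi => (hm i hi).1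
  · simp only [mem_biUnion]
    rintro e ⟨i, hi, he⟩ f ⟨j, hj, hf⟩ hef v ⟨hve, hvf⟩
    obtain rfl := hsep i hi j hj e he f hf v hve hvf
    exact (hm i hi).2 e he f hf hef v ⟨hve, hvf⟩
  · induction e using Sym2.ind with
    | _ a b =>
      exact hij (hsep i hi j hj _ hei _ hej a (Sym2.mem_mk_left a b) (Sym2.mem_mk_left a b))

variable [Fintype V]

lemma IsMatchingFinset.card_le_matNum (hm : IsMatchingFinset G m) : #m ≤ matNum G :=
  le_csSup ⟨Fintype.card (Sym2 V), by rintro n ⟨m, -, rfl⟩; exact card_le_univ m⟩ ⟨m, hm, rfl⟩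

lemma exists_isMatchingFinset_card_eq_matNum (G : SimpleGraph V) :
    ∃ m, IsMatchingFinset G m ∧ #m = matNum G :=
  Nat.sSup_mem (s := {n | ∃ m, IsMatchingFinset G m ∧ #m = n}) ⟨0, ∅, ⟨by simp, by simp⟩, rfl⟩
    ⟨Fintype.card (Sym2 V), by rintro n ⟨m, -, rfl⟩; exact card_le_univ m⟩

lemma matNum_mono {H : SimpleGraph V} (h : G ≤ H) : matNum G ≤ matNum H := by
  obtain ⟨m, hm, hcard⟩ := exists_isMatchingFinset_card_eq_matNum G
  exact hcard ▸ (hm.mono h).card_le_matNum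

lemma card_compl_matchedVerts (hm : IsMatchingFinset G m) :
    #(matchedVerts m)ᶜ = Fintype.card V - 2 * #m := by
  rw [card_compl, hm.card_matchedVerts]

lemma mem_matchedVerts_of_adj (hm : IsMatchingFinset G m) (hmax : #m = matNum G) {u w : V}
    (huw : G.Adj u w) (hu : u ∉ matchedVerts m) : w ∈ matchedVerts m := by
  by_contra hw
  have := (hm.insert huw hu hw).card_le_matNum
  rw [card_insert_of_notMem_matchedVerts hu] at this
  omega

end Matching

section Components

variable {V : Type*} [Fintype V] {G : SimpleGraph V}

lemma edgeCount_eq_card_edgeFinset (G : SimpleGraph V) : edgeCount G = #G.edgeFinset := by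
  simp [edgeCount, SimpleGraph.edgeFinset, Set.ncard_eq_toFinset_card']

lemma IsMatchingFinset.card_filter_le_matNum_induce {m : Finset (Sym2 V)}
    (hm : IsMatchingFinset G m) (s : Set V) :
    #{e ∈ m | ∀ v ∈ e, v ∈ s} ≤ matNum (G.induce s) := by
  let f := Embedding.induce (G := G) s
  calc #{e ∈ m | ∀ v ∈ e, v ∈ s}
      ≤ #((m.preimage (Sym2.map f) (Sym2.map.injective f.injective).injOn).image (Sym2.map f)) :=
        card_le_card fun e he => by
          obtain ⟨he, hes⟩ := mem_filter.1 he
          have hlift : (e.attachWith hes).map Subtype.val = e := Sym2.attachWith_map_subtypeVal hes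
          exact mem_image.2 ⟨_, mem_preimage.2 (by rw [← hlift] at he; exact he), hlift⟩
    _ ≤ _ := card_image_le
    _ ≤ matNum (G.induce s) := (hm.comap f).card_le_matNum

lemma sum_matNum_induce_supp_le (G : SimpleGraph V) :
    ∑ c : G.ConnectedComponent, matNum (G.induce c.supp) ≤ matNum G := by
  choose m hm hcard using fun c : G.ConnectedComponent =>
    exists_isMatchingFinset_card_eq_matNum (G.induce c.supp)
  let f (c : G.ConnectedComponent) := Embedding.induce (G := G) c.supp
  let M c := (m c).image (Sym2.map (f c))
  have hverts c : matchedVerts (M c) ⊆ c.supp.toFinset := by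
    intro v hv
    obtain ⟨e, he, hve⟩ := mem_matchedVerts.1 hv
    obtain ⟨e', -, rfl⟩ := mem_image.1 he
    obtain ⟨a, -, rfl⟩ := Sym2.mem_map.1 hve
    simp [f]
  obtain ⟨hM, hMcard⟩ := IsMatchingFinset.biUnion (s := univ) (m := M)
    (fun c _ => (hm c).map (f c)) fun c _ d _ hcd =>
      (Set.disjoint_toFinset.2 (G.pairwise_disjoint_supp_connectedComponent hcd)).mono
        (hverts c) (hverts d)
  calc ∑ c : G.ConnectedComponent, matNum (G.induce c.supp) = ∑ c, #(M c) := by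
        refine sum_congr rfl fun c _ => ?_
        rw [card_image_of_injective _ (Sym2.map.injective (f c).injective), hcard]
    _ = #(univ.biUnion M) := hMcard.symm
    _ ≤ matNum G := hM.card_le_matNum

lemma edgeCount_le_sum_edgeCount_induce_supp (G : SimpleGraph V) :
    edgeCount G ≤ ∑ c : G.ConnectedComponent, edgeCount (G.induce c.supp) := by
  let f (c : G.ConnectedComponent) := Embedding.induce (G := G) c.supp
  have hcover : G.edgeFinset ⊆ univ.biUnion fun c =>
      (G.induce c.supp).edgeFinset.image (Sym2.map (f c)) := by
    intro e he
    induction e using Sym2.ind with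
    | _ a b =>
      have hab : G.Adj a b := by simpa using he
      have hb : b ∈ (G.connectedComponentMk a).supp :=
        ((G.connectedComponentMk a).mem_supp_congr_adj hab).1 rfl
      exact mem_biUnion.2 ⟨G.connectedComponentMk a, mem_univ _, mem_image.2
        ⟨s(⟨a, rfl⟩, ⟨b, hb⟩), by simpa using hab, rfl⟩⟩
  simp only [edgeCount_eq_card_edgeFinset]
  exact (card_le_card hcover).trans (card_biUnion_le.trans (sum_le_sum fun c _ => card_image_le))

lemma matNum_induce_supp_pos (hiso : ∀ v, ∃ u, G.Adj v u) (c : G.ConnectedComponent) :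
    0 < matNum (G.induce c.supp) := by
  obtain ⟨v, hv⟩ := c.exists_rep
  obtain ⟨u, hvu⟩ := hiso v
  have hu : u ∈ c.supp := hv ▸ ((G.connectedComponentMk v).mem_supp_congr_adj hvu).1 rfl
  exact (isMatchingFinset_singleton (G := G.induce c.supp) (a := ⟨v, hv⟩) (b := ⟨u, hu⟩)
    hvu).card_le_matNum

end Components

section Gallai

variable {V : Type*}

/-- A vertex is essential when every maximum matching covers it, i.e. when deleting its edges
lowers the matching number. -/
def NoEssentialVertex (G : SimpleGraph V) : Prop :=
  ∀ v, matNum (G.deleteIncidenceSet v) = matNum G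

variable [Fintype V] {G : SimpleGraph V}

lemma NoEssentialVertex.exists_isMatchingFinset_notMem (hG : NoEssentialVertex G) (x : V) :
    ∃ m, IsMatchingFinset G m ∧ #m = matNum G ∧ x ∉ matchedVerts m := by
  obtain ⟨m, hm, hcard⟩ := exists_isMatchingFinset_card_eq_matNum (G.deleteIncidenceSet x)
  refine ⟨m, hm.mono (G.deleteIncidenceSet_le x), hcard.trans (hG x), fun hx => ?_⟩
  obtain ⟨e, he, hxe⟩ := mem_matchedVerts.1 hx
  have := hm.1 he
  rw [edgeSet_deleteIncidenceSet] at this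
  exact this.2 ⟨this.1, hxe⟩

/-- The `M`-edge `yz` could replace the `N`-edge at `z`, giving a maximum matching that still
misses `x` and shares more edges with `M`. -/
lemma notMem_matchedVerts_of_forall_card_inter_le {M N : Finset (Sym2 V)}
    (hM : IsMatchingFinset G M) (hN : IsMatchingFinset G N) (hNmax : #N = matNum G) {x y : V}
    (hxN : x ∉ matchedVerts N)
    (hbest : ∀ N', IsMatchingFinset G N' → #N' = matNum G → x ∉ matchedVerts N' →
      #(M ∩ N') ≤ #(M ∩ N))
    (hyN : y ∉ matchedVerts N) (hyx : y ≠ x) : y ∉ matchedVerts M := by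
  intro hyM
  obtain ⟨e, heM, hye⟩ := mem_matchedVerts.1 hyM
  obtain ⟨z, rfl⟩ := Sym2.mem_iff_exists.1 hye
  have hyz : G.Adj y z := hM.1 heM
  obtain ⟨f, hfN, hzf⟩ := mem_matchedVerts.1 (mem_matchedVerts_of_adj hN hNmax hyz hyN)
  have hy' : y ∉ matchedVerts (N.erase f) := fun h => hyN (matchedVerts_mono (erase_subset _ _) h)
  have hz' : z ∉ matchedVerts (N.erase f) := fun h => by
    obtain ⟨g, hg, hzg⟩ := mem_matchedVerts.1 h
    exact (mem_erase.1 hg).1 (hN.eq_of_mem_of_mem (mem_of_mem_erase hg) hfN hzg hzf)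
  have hN' : IsMatchingFinset G (insert s(y, z) (N.erase f)) :=
    (hN.subset (erase_subset _ _)).insert hyz hy' hz'
  have hN'max : #(insert s(y, z) (N.erase f)) = matNum G := by
    rw [card_insert_of_notMem_matchedVerts hy', card_erase_add_one hfN, hNmax]
  have hxN' : x ∉ matchedVerts (insert s(y, z) (N.erase f)) := by
    have hxz : x ≠ z := by rintro rfl; exact hxN (mem_matchedVerts.2 ⟨f, hfN, hzf⟩)
    simp only [mem_matchedVerts, exists_mem_insert, Sym2.mem_iff, not_or, not_exists, not_and]
    exact ⟨⟨hyx.symm, hxz⟩, fun g hg hxg => hxN (mem_matchedVerts.2 ⟨g, mem_of_mem_erase hg, hxg⟩)⟩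
  have hfM : f ∉ M := fun hfM => hyN (mem_matchedVerts.2
    ⟨f, hfN, hM.eq_of_mem_of_mem heM hfM (Sym2.mem_mk_right y z) hzf ▸ Sym2.mem_mk_left y z⟩)
  have hgrow : M ∩ N ⊂ M ∩ insert s(y, z) (N.erase f) := by
    have hsub : M ∩ N ⊆ M ∩ insert s(y, z) (N.erase f) := fun g hg => by
      obtain ⟨hgM, hgN⟩ := mem_inter.1 hg
      exact mem_inter.2 ⟨hgM, mem_insert_of_mem (mem_erase.2 ⟨fun h => hfM (h ▸ hgM), hgN⟩)⟩
    refine (ssubset_iff_of_subset hsub).2 ⟨s(y, z), mem_inter.2 ⟨heM, mem_insert_self _ _⟩, ?_⟩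
    exact fun h => hyN (mem_matchedVerts.2 ⟨_, (mem_inter.1 h).2, Sym2.mem_mk_left y z⟩)
  exact (card_lt_card hgrow).not_ge (hbest _ hN' hN'max hxN')

/-- Gallai's lemma. Induction on a walk `u x ⋯ w`: a maximum matching `N` missing `x` and sharing
as many edges with `M` as possible misses only `x` and vertices missed by `M` other than `u` and
`w`, so it misses fewer vertices than `M`. -/
lemma NoEssentialVertex.not_reachable (hG : NoEssentialVertex G) {M : Finset (Sym2 V)}
    (hM : IsMatchingFinset G M) (hMmax : #M = matNum G) {u w : V} (hu : u ∉ matchedVerts M)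
    (hw : w ∉ matchedVerts M) (huw : u ≠ w) : ¬G.Reachable u w := by
  rintro ⟨p⟩
  induction p generalizing M with
  | nil => exact huw rfl
  | @cons u x w hux p ih =>
    by_cases hxw : x = w
    · subst hxw
      exact hw (mem_matchedVerts_of_adj hM hMmax hux hu)
    obtain ⟨N, hNmem, hbest⟩ := exists_max_image
      {N | IsMatchingFinset G N ∧ #N = matNum G ∧ x ∉ matchedVerts N} (fun N => #(M ∩ N))
      (let ⟨N, hN⟩ := hG.exists_isMatchingFinset_notMem x; ⟨N, by simpa using hN⟩)
    obtain ⟨hN, hNmax, hxN⟩ := (mem_filter.1 hNmem).2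
    have hmissed : (matchedVerts N)ᶜ ⊆ insert x ((matchedVerts M)ᶜ \ {u, w}) := by
      intro y hy
      rw [mem_compl] at hy
      by_cases hyx : y = x
      · exact hyx ▸ mem_insert_self _ _
      have hyM := notMem_matchedVerts_of_forall_card_inter_le hM hN hNmax hxN
        (fun N' h₁ h₂ h₃ => hbest N' (mem_filter.2 ⟨mem_univ _, h₁, h₂, h₃⟩)) hy hyx
      have hyu : y ≠ u := by
        rintro rfl
        exact hy (mem_matchedVerts_of_adj hN hNmax hux.symm hxN)
      have hyw : y ≠ w := by
        rintro rfl
        exact ih hN hNmax hxN hy hxw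
      simp [hyM, hyu, hyw]
    have hpair : {u, w} ⊆ (matchedVerts M)ᶜ := by simp [insert_subset_iff, hu, hw]
    have := (card_le_card hmissed).trans (card_insert_le _ _)
    rw [card_sdiff_of_subset hpair, card_pair huw, card_compl_matchedVerts hN,
      card_compl_matchedVerts hM, hNmax, hMmax] at this
    have := card_le_card hpair
    rw [card_pair huw, card_compl_matchedVerts hM] at this
    omega

lemma NoEssentialVertex.card_supp_le (hG : NoEssentialVertex G) (c : G.ConnectedComponent) :
    Nat.card c.supp ≤ 2 * matNum (G.induce c.supp) + 1 := by
  obtain ⟨M, hM, hMmax⟩ := exists_isMatchingFinset_card_eq_matNum G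
  have hcovered : c.supp.toFinset ∩ matchedVerts M ⊆
      matchedVerts {e ∈ M | ∀ v ∈ e, v ∈ c.supp} := by
    intro v hv
    obtain ⟨hvc, hvM⟩ := mem_inter.1 hv
    obtain ⟨e, he, hve⟩ := mem_matchedVerts.1 hvM
    refine mem_matchedVerts.2 ⟨e, mem_filter.2 ⟨he, fun w hwe => ?_⟩, hve⟩
    rw [Set.mem_toFinset] at hvc
    obtain ⟨z, rfl⟩ := Sym2.mem_iff_exists.1 hve
    rcases Sym2.mem_iff.1 hwe with rfl | rfl
    exacts [hvc, (c.mem_supp_congr_adj (hM.1 he)).1 hvc]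
  have hmissed : #(c.supp.toFinset \ matchedVerts M) ≤ 1 := by
    refine card_le_one.2 fun u hu w hw => by_contra fun huw => ?_
    simp only [mem_sdiff, Set.mem_toFinset] at hu hw
    exact hG.not_reachable hM hMmax hu.2 hw.2 huw (c.reachable_of_mem_supp hu.1 hw.1)
  rw [Nat.card_eq_card_toFinset, ← card_inter_add_card_sdiff _ (matchedVerts M)]
  have := (card_le_card hcovered).trans_eq ((hM.subset (filter_subset _ _)).card_matchedVerts)
  have : #{e ∈ M | ∀ v ∈ e, v ∈ c.supp} ≤ matNum (G.induce c.supp) := by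
    convert hM.card_filter_le_matNum_induce c.supp
  omega

end Gallai

section EdgeBounds

variable {V : Type*} [Fintype V] {G : SimpleGraph V} {Δ : ℕ}

lemma degree_le_maxDeg (G : SimpleGraph V) (v : V) : G.degree v ≤ maxDeg G := by
  rw [← card_neighborSet_eq_degree, ← Nat.card_eq_fintype_card, Nat.card_coe_set_eq]
  exact le_ciSup (f := fun v => (G.neighborSet v).ncard) (Set.finite_range _).bddAbove v

lemma maxDeg_mono {H : SimpleGraph V} (h : H ≤ G) : maxDeg H ≤ maxDeg G :=
  ciSup_le' fun v => (Set.ncard_le_ncard (neighborSet_mono h v) (Set.toFinite _)).trans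
    (le_ciSup (f := fun v => (G.neighborSet v).ncard) (Set.finite_range _).bddAbove v)

lemma maxDeg_induce_le (s : Set V) : maxDeg (G.induce s) ≤ maxDeg G :=
  ciSup_le' fun v => (Set.ncard_le_ncard_of_injOn Subtype.val (fun _ hw => hw)
    Subtype.val_injective.injOn (Set.toFinite _)).trans
    (le_ciSup (f := fun v => (G.neighborSet v).ncard) (Set.finite_range _).bddAbove v)

lemma eq_of_le_of_edgeCount_le {H : SimpleGraph V} (h : H ≤ G)
    (he : edgeCount G ≤ edgeCount H) : H = G :=
  edgeSet_injective (Set.eq_of_subset_of_ncard_le (edgeSet_mono h) he (Set.toFinite _))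

lemma exists_le_noEssentialVertex (hdeg : maxDeg G ≤ Δ) :
    ∃ H ≤ G, NoEssentialVertex H ∧ edgeCount G + Δ * matNum H ≤ Δ * matNum G + edgeCount H := by
  induction hn : matNum G using Nat.strong_induction_on generalizing G with
  | _ n ih =>
    by_cases hG : NoEssentialVertex G
    · exact ⟨G, le_rfl, hG, by rw [hn]; omega⟩
    obtain ⟨v, hv⟩ := not_forall.1 hG
    have hlt : matNum (G.deleteIncidenceSet v) < n :=
      hn ▸ (matNum_mono (G.deleteIncidenceSet_le v)).lt_of_ne hv
    obtain ⟨H, hH, hHG, hHe⟩ :=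
      ih _ hlt ((maxDeg_mono (G.deleteIncidenceSet_le v)).trans hdeg) rfl
    refine ⟨H, hH.trans (G.deleteIncidenceSet_le v), hHG, ?_⟩
    have hdel : edgeCount (G.deleteIncidenceSet v) = edgeCount G - G.degree v := by
      simp only [edgeCount_eq_card_edgeFinset]
      convert G.card_edgeFinset_deleteIncidenceSet v
    have hstep := Nat.mul_le_mul_left Δ hlt
    rw [Nat.mul_succ] at hstep
    have := (degree_le_maxDeg G v).trans hdeg
    omega

lemma two_mul_edgeCount_le (hdeg : maxDeg G ≤ Δ) : 2 * edgeCount G ≤ Δ * Fintype.card V := by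
  rw [edgeCount_eq_card_edgeFinset, ← sum_degrees_eq_twice_card_edges, mul_comm, ← smul_eq_mul,
    ← card_univ, ← sum_const]
  exact sum_le_sum fun v _ => (degree_le_maxDeg G v).trans hdeg

/-- The degree bound when `ν ≥ ⌈Δ/2⌉`; otherwise `2ν + 1 ≤ Δ` and the bound `(2ν + 1).choose 2`
of the complete graph suffices. -/
lemma edgeCount_le_of_card_le (hdeg : maxDeg G ≤ Δ)
    (hcard : Fintype.card V ≤ 2 * matNum G + 1) :
    edgeCount G ≤ Δ * matNum G + if (Δ + 1) / 2 ≤ matNum G then Δ / 2 else 0 := by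
  set ν := matNum G
  split_ifs with hν
  · have := two_mul_edgeCount_le hdeg
    have := Nat.mul_le_mul_left Δ hcard
    rw [mul_add, mul_one, mul_left_comm] at this
    omega
  · have hchoose : (2 * ν + 1).choose 2 = (2 * ν + 1) * ν := by
      rw [Nat.choose_two_right, Nat.add_sub_cancel, mul_left_comm,
        Nat.mul_div_cancel_left _ two_pos]
    calc edgeCount G ≤ (Fintype.card V).choose 2 :=
          edgeCount_eq_card_edgeFinset G ▸ card_edgeFinset_le_card_choose_two
      _ ≤ (2 * ν + 1) * ν := hchoose ▸ Nat.choose_le_choose 2 hcard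
      _ ≤ Δ * ν + 0 := Nat.mul_le_mul_right ν (by omega)

lemma NoEssentialVertex.edgeCount_le (hG : NoEssentialVertex G) (hdeg : maxDeg G ≤ Δ) :
    edgeCount G ≤ Δ * ∑ c : G.ConnectedComponent, matNum (G.induce c.supp) +
      #{c : G.ConnectedComponent | (Δ + 1) / 2 ≤ matNum (G.induce c.supp)} * (Δ / 2) := by
  calc edgeCount G ≤ ∑ c : G.ConnectedComponent, edgeCount (G.induce c.supp) :=
        edgeCount_le_sum_edgeCount_induce_supp G
    _ ≤ _ := sum_le_sum fun c _ => edgeCount_le_of_card_le ((maxDeg_induce_le c.supp).trans hdeg)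
        (Nat.card_eq_fintype_card.symm.trans_le (hG.card_supp_le c))
    _ = _ := by rw [sum_add_distrib, ← mul_sum, ← sum_filter, sum_const, smul_eq_mul]

end EdgeBounds

section Counting

variable {ι : Type*} [Fintype ι] {f : ι → ℕ} {k : ℕ}

lemma sum_ite_le_eq_mul_card_filter (f : ι → ℕ) (k : ℕ) :
    ∑ i, (if k ≤ f i then k else 0) = k * #{i | k ≤ f i} := by
  rw [← sum_filter, sum_const, smul_eq_mul, mul_comm]

lemma mul_card_filter_le_sum (f : ι → ℕ) (k : ℕ) : k * #{i | k ≤ f i} ≤ ∑ i, f i :=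
  (sum_ite_le_eq_mul_card_filter f k).symm.trans_le <|
    sum_le_sum fun i _ => by split_ifs <;> omega

lemma eq_of_sum_le_mul_card_filter (h : ∑ i, f i ≤ k * #{i | k ≤ f i}) (hpos : ∀ i, 0 < f i)
    (i : ι) : f i = k := by
  rw [← sum_ite_le_eq_mul_card_filter] at h
  have hle (i : ι) : (if k ≤ f i then k else 0) ≤ f i := by split_ifs <;> omega
  have heq := (sum_eq_sum_iff_of_le fun i _ => hle i).1 (h.antisymm' (sum_le_sum fun i _ => hle i))
    i (mem_univ i)
  have := hpos i
  split_ifs at heq <;> omega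

end Counting

theorem extremal_component_matNum_of_dvd_general (Δ ν : ℕ) (hΔ : 2 ≤ Δ)
    (hdvd : (Δ + 1) / 2 ∣ ν)
    {V : Type*} [Fintype V] (G : SimpleGraph V)
    (hiso : ∀ v, ∃ u, G.Adj v u)
    (hdeg : maxDeg G ≤ Δ) (hmat : matNum G ≤ ν)
    (hE : edgeCount G = Δ * ν + (ν / ((Δ + 1) / 2)) * (Δ / 2)) :
    ∀ c : G.ConnectedComponent, matNum (G.induce c.supp) = (Δ + 1) / 2 := by
  set k := (Δ + 1) / 2
  set q := ν / k
  have hkq : k * q = ν := Nat.mul_div_cancel' hdvd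
  obtain ⟨H, hHG, hH, hHe⟩ := exists_le_noEssentialVertex hdeg
  set f := fun c : H.ConnectedComponent => matNum (H.induce c.supp)
  set t := #{c | k ≤ f c}
  have hHedges : edgeCount H ≤ Δ * ∑ c, f c + t * (Δ / 2) :=
    hH.edgeCount_le ((maxDeg_mono hHG).trans hdeg)
  have hsum : ∑ c, f c ≤ matNum H := sum_matNum_induce_supp_le H
  have hkt : k * t ≤ ∑ c, f c := mul_card_filter_le_sum f k
  have hmatle : matNum H ≤ matNum G := matNum_mono hHG
  have hqt : q ≤ t := by
    have := Nat.mul_le_mul_left Δ hsum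
    have := Nat.mul_le_mul_left Δ hmat
    exact Nat.le_of_mul_le_mul_right (by omega : q * (Δ / 2) ≤ t * (Δ / 2)) (by omega)
  -- hence `k q ≤ k t ≤ ∑ c, f c ≤ ν(H) ≤ ν(G) ≤ ν = k q` is a chain of equalities
  have := Nat.mul_le_mul_left k hqt
  have hmatHG : matNum H = matNum G := by omega
  rw [hmatHG] at hHe
  obtain rfl : H = G := eq_of_le_of_edgeCount_le hHG (by omega)
  exact eq_of_sum_le_mul_card_filter (show ∑ c, f c ≤ k * t by omega) (matNum_induce_supp_pos hiso)

/-- If `Δ, ν ≥ 2`, `⌈Δ/2⌉ ∣ ν`, and `G` is a graph with no isolated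
vertices, `Δ(G) ≤ Δ`, `ν(G) ≤ ν`, and exactly `Δν + (ν/⌈Δ/2⌉)⌊Δ/2⌋` edges, then every
connected component `C` of `G` has matching number `⌈Δ/2⌉`. -/
theorem extremal_component_matNum_of_dvd (Δ ν : ℕ) (hΔ : 2 ≤ Δ) (hν : 2 ≤ ν)
    (hdvd : (Δ + 1) / 2 ∣ ν)
    {V : Type*} [Fintype V] (G : SimpleGraph V)
    (hiso : ∀ v, ∃ u, G.Adj v u)
    (hdeg : maxDeg G ≤ Δ) (hmat : matNum G ≤ ν)
    (hE : edgeCount G = Δ * ν + (ν / ((Δ + 1) / 2)) * (Δ / 2)) :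
    ∀ c : G.ConnectedComponent, matNum (G.induce c.supp) = (Δ + 1) / 2 :=
  extremal_component_matNum_of_dvd_general Δ ν hΔ hdvd G hiso hdeg hmat hE
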